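/- arXiv:2104.02111 — 5 statements merged into one kernel-verified Lean document; each statement's English description precedes it below -/
import Mathlib

section
/- Let n, m be positive integers and let N = n(n-1)/2 + n(n+1)/2 + nm. Identify the real vector space PHT_{n,m} of triples (J,H,B), where J is an n×n real skew-symmetric matrix, H is an n×n real symmetric matrix, and B is an n×m real matrix, with ℝ^N via the coordinates J_{ij} (i<j), H_{ij} (i≤j), and the entries of B. Then the set PH^cont_{n,m} of controllable port-Hamiltonian systems, i.e. triples (J,H,B) ∈ PH_{n,m} such that the pair (JH, B) is controllable, is relative generic in PH_{n,m} (both regarded as subsets of ℝ^N). -/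
open Set Matrix

/-- An algebraic variety in `𝕜^N`: the common zero locus of finitely many
polynomials in `N` indeterminates. -/
def IsAlgebraicVariety {𝕜 : Type*} [CommSemiring 𝕜] {N : ℕ} (W : Set (Fin N → 𝕜)) : Prop :=
  ∃ (k : ℕ) (p : Fin k → MvPolynomial (Fin N) 𝕜),
    W = {x | ∀ i, MvPolynomial.eval x (p i) = 0}

/-- A proper algebraic variety in `𝕜^N`. -/
def IsProperAlgebraicVariety {𝕜 : Type*} [CommSemiring 𝕜] {N : ℕ} (W : Set (Fin N → 𝕜)) : Prop :=
  IsAlgebraicVariety W ∧ W ≠ Set.univ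

/-- A generic set: the complement is contained in a proper algebraic variety. -/
def IsGeneric {𝕜 : Type*} [CommSemiring 𝕜] {N : ℕ} (S : Set (Fin N → 𝕜)) : Prop :=
  ∃ W : Set (Fin N → 𝕜), IsProperAlgebraicVariety W ∧ Sᶜ ⊆ W

/-- `S` is relative generic in `V`: there is a proper algebraic variety `W` with
`V ∩ Sᶜ ⊆ W` and `V ∩ Wᶜ` dense in `V`. -/
def IsRelativeGeneric {𝕜 : Type*} [RCLike 𝕜] {N : ℕ} (S V : Set (Fin N → 𝕜)) : Prop :=
  ∃ W : Set (Fin N → 𝕜), IsProperAlgebraicVariety W ∧ V ∩ Sᶜ ⊆ W ∧ V ⊆ closure (V ∩ Wᶜ)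

/-- The Kalman matrix `[B, AB, …, A^{n-1}B]` of the pair `(A, B)`. -/
def kalmanMatrix {n m : ℕ} (A : Matrix (Fin n) (Fin n) ℝ) (B : Matrix (Fin n) (Fin m) ℝ) :
    Matrix (Fin n) (Fin n × Fin m) ℝ :=
  Matrix.of fun i p => (A ^ (p.1 : ℕ) * B) i p.2

/-- The pair `(A, B)` is controllable iff its Kalman matrix has rank `n`. -/
def Controllable {n m : ℕ} (A : Matrix (Fin n) (Fin n) ℝ)
    (B : Matrix (Fin n) (Fin m) ℝ) : Prop :=
  (kalmanMatrix A B).rank = n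

/-- The ambient space of matrix triples `(J, H, B)`. -/
abbrev MatrixTriple (n m : ℕ) :=
  Matrix (Fin n) (Fin n) ℝ × Matrix (Fin n) (Fin n) ℝ × Matrix (Fin n) (Fin m) ℝ

/-- The subspace `PHT_{n,m}` of triples `(J,H,B)` with `J` skew-symmetric and
`H` symmetric. -/
def PHT (n m : ℕ) : Submodule ℝ (MatrixTriple n m) where
  carrier := {x | (x.1)ᵀ = -x.1 ∧ (x.2.1)ᵀ = x.2.1}
  add_mem' := by
    rintro ⟨J, H, B⟩ ⟨J', H', B'⟩ ⟨h1, h2⟩ ⟨h1', h2'⟩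
    refine ⟨?_, ?_⟩ <;> simp_all [Matrix.transpose_add] <;> abel
  zero_mem' := by refine ⟨?_, ?_⟩ <;> simp
  smul_mem' := by
    rintro c ⟨J, H, B⟩ ⟨h1, h2⟩
    refine ⟨?_, ?_⟩ <;> simp_all [Matrix.transpose_smul]

namespace PHAux

open MvPolynomial

/-- The polynomial on `ℝ^N` representing a linear functional. -/
noncomputable def linPoly {N : ℕ} (f : (Fin N → ℝ) →ₗ[ℝ] ℝ) : MvPolynomial (Fin N) ℝ :=
  ∑ k, MvPolynomial.C (f fun j => if k = j then 1 else 0) * MvPolynomial.X k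

lemma eval_linPoly {N : ℕ} (f : (Fin N → ℝ) →ₗ[ℝ] ℝ) (x : Fin N → ℝ) :
    MvPolynomial.eval x (linPoly f) = f x := by
  rw [linPoly, map_sum, LinearMap.pi_apply_eq_sum_univ f x]
  refine Finset.sum_congr rfl fun k _ => ?_
  simp [mul_comm]

variable {n m N : ℕ}

/-- The entries of the `J`-component, as linear functionals. -/
def Jent (i j : Fin n) : MatrixTriple n m →ₗ[ℝ] ℝ where
  toFun x := x.1 i j
  map_add' _ _ := rfl
  map_smul' _ _ := rfl

/-- The entries of the `H`-component, as linear functionals. -/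
def Hent (i j : Fin n) : MatrixTriple n m →ₗ[ℝ] ℝ where
  toFun x := x.2.1 i j
  map_add' _ _ := rfl
  map_smul' _ _ := rfl

/-- The entries of the `B`-component, as linear functionals. -/
def Bent (i : Fin n) (j : Fin m) : MatrixTriple n m →ₗ[ℝ] ℝ where
  toFun x := x.2.2 i j
  map_add' _ _ := rfl
  map_smul' _ _ := rfl

variable (L : (Fin N → ℝ) →ₗ[ℝ] MatrixTriple n m)

/-- The matrix of polynomials representing the `J`-component. -/
noncomputable def Jmat : Matrix (Fin n) (Fin n) (MvPolynomial (Fin N) ℝ) :=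
  Matrix.of fun i j => linPoly ((Jent i j).comp L)

/-- The matrix of polynomials representing the `H`-component. -/
noncomputable def Hmat : Matrix (Fin n) (Fin n) (MvPolynomial (Fin N) ℝ) :=
  Matrix.of fun i j => linPoly ((Hent i j).comp L)

/-- The matrix of polynomials representing the `B`-component. -/
noncomputable def Bmat : Matrix (Fin n) (Fin m) (MvPolynomial (Fin N) ℝ) :=
  Matrix.of fun i j => linPoly ((Bent i j).comp L)

lemma Jmat_eval (x : Fin N → ℝ) : (Jmat L).map (MvPolynomial.eval x) = (L x).1 := by
  ext i j; simp [Jmat, eval_linPoly, Jent]; rfl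

lemma Hmat_eval (x : Fin N → ℝ) : (Hmat L).map (MvPolynomial.eval x) = (L x).2.1 := by
  ext i j; simp [Hmat, eval_linPoly, Hent]; rfl

lemma Bmat_eval (x : Fin N → ℝ) : (Bmat L).map (MvPolynomial.eval x) = (L x).2.2 := by
  ext i j; simp [Bmat, eval_linPoly, Bent]; rfl

/-- The matrix of polynomials representing the Kalman matrix. -/
noncomputable def Kpoly : Matrix (Fin n) (Fin n × Fin m) (MvPolynomial (Fin N) ℝ) :=
  Matrix.of fun i p => (((Jmat L * Hmat L) ^ (p.1 : ℕ)) * Bmat L) i p.2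

lemma Kpoly_eval (x : Fin N → ℝ) :
    (Kpoly L).map (MvPolynomial.eval x)
      = kalmanMatrix ((L x).1 * (L x).2.1) (L x).2.2 := by
  have key : ∀ p : ℕ, (((Jmat L * Hmat L) ^ p * Bmat L)).map (MvPolynomial.eval x)
      = ((L x).1 * (L x).2.1) ^ p * (L x).2.2 := by
    intro p
    rw [Matrix.map_mul, Bmat_eval]
    congr 1
    have h1 : ((Jmat L * Hmat L) ^ p).map (MvPolynomial.eval x)
        = ((Jmat L * Hmat L).map (MvPolynomial.eval x)) ^ p := by
      have := map_pow ((MvPolynomial.eval x).mapMatrix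
        (m := Fin n)) (Jmat L * Hmat L) p
      simpa [RingHom.mapMatrix_apply] using this
    rw [h1, Matrix.map_mul, Jmat_eval, Hmat_eval]
  ext i p
  have h := congrFun (congrFun (key p.1) i) p.2
  simpa [Kpoly, kalmanMatrix, Matrix.map_apply] using h

/-- The sum-of-squares-of-minors polynomial whose nonvanishing certifies
controllability. -/
noncomputable def qPoly : MvPolynomial (Fin N) ℝ :=
  ∑ c : Fin n → Fin n × Fin m, ((Kpoly L).submatrix id c).det ^ 2

lemma eval_qPoly (x : Fin N → ℝ) :
    MvPolynomial.eval x (qPoly L)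
      = ∑ c : Fin n → Fin n × Fin m,
          (((kalmanMatrix ((L x).1 * (L x).2.1) (L x).2.2).submatrix id c).det) ^ 2 := by
  rw [qPoly, map_sum]
  refine Finset.sum_congr rfl fun c _ => ?_
  rw [map_pow, RingHom.map_det, RingHom.mapMatrix_apply, ← Matrix.submatrix_map, Kpoly_eval]

lemma controllable_of_eval_ne {x : Fin N → ℝ}
    (h : MvPolynomial.eval x (qPoly L) ≠ 0) :
    Controllable ((L x).1 * (L x).2.1) (L x).2.2 := by
  rw [eval_qPoly] at h
  obtain ⟨c, -, hc⟩ := Finset.exists_ne_zero_of_sum_ne_zero h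
  set K := kalmanMatrix ((L x).1 * (L x).2.1) (L x).2.2 with hK
  have hdet : (K.submatrix id c).det ≠ 0 := fun h0 => hc (by rw [h0]; ring)
  have hsubrank : (K.submatrix id c).rank = n := by
    rw [Matrix.rank_of_isUnit _ ((Matrix.isUnit_iff_isUnit_det _).2 hdet.isUnit)]
    simp
  have hfact : K.submatrix id c
      = K * (Matrix.of fun q p => if q = c p then (1:ℝ) else 0) := by
    ext i p
    simp [Matrix.mul_apply, Matrix.submatrix_apply, Finset.sum_ite_eq']
  have h1 : (K.submatrix id c).rank ≤ K.rank := by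
    rw [hfact]; exact Matrix.rank_mul_le_left _ _
  have h2 : K.rank ≤ n := le_trans (Matrix.rank_le_card_height K) (by simp)
  exact le_antisymm h2 (le_trans hsubrank.ge h1)

/-- A tridiagonal skew-symmetric matrix giving a controllable example. -/
def Jtri (n : ℕ) : Matrix (Fin n) (Fin n) ℝ :=
  Matrix.of fun i j => if (i : ℕ) + 1 = (j : ℕ) then 1
    else if (j : ℕ) + 1 = (i : ℕ) then -1 else 0

lemma Jtri_skew : (Jtri n)ᵀ = -(Jtri n) := by
  ext i j
  simp only [Jtri, transpose_apply, Matrix.neg_apply, Matrix.of_apply]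
  split_ifs <;> first | (exfalso; omega) | norm_num

/-- The input matrix for the controllable example. -/
def B0 (n m : ℕ) : Matrix (Fin n) (Fin m) ℝ :=
  Matrix.of fun i j => if (i : ℕ) = 0 ∧ (j : ℕ) = 0 then 1 else 0

lemma Jtri_pow (hn : 0 < n) (p : ℕ) :
    (∀ i : Fin n, p < (i : ℕ) → (Jtri n ^ p) i ⟨0, hn⟩ = 0) ∧
    (∀ i : Fin n, (i : ℕ) = p → (Jtri n ^ p) i ⟨0, hn⟩ = (-1 : ℝ) ^ p) := by
  induction p with
  | zero =>
    constructor
    · intro i hi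
      have : i ≠ ⟨0, hn⟩ := by
        intro h; rw [h] at hi; simp at hi
      simp [Matrix.one_apply, this]
    · intro i hi
      have : i = ⟨0, hn⟩ := Fin.ext hi
      simp [this, Matrix.one_apply]
  | succ p ih =>
    have hpow : Jtri n ^ (p + 1) = Jtri n * Jtri n ^ p := by
      rw [pow_succ']
    constructor
    · intro i hi
      rw [hpow, Matrix.mul_apply]
      apply Finset.sum_eq_zero
      intro k _
      by_cases h1 : (i : ℕ) + 1 = (k : ℕ)
      · rw [ih.1 k (by omega)]; ring
      · by_cases h2 : (k : ℕ) + 1 = (i : ℕ)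
        · rw [ih.1 k (by omega)]; ring
        · simp [Jtri, h1, h2]
    · intro i hi
      rw [hpow, Matrix.mul_apply]
      have hpn : p < n := by have := i.isLt; omega
      rw [Finset.sum_eq_single (⟨p, hpn⟩ : Fin n)]
      · have h1 : ¬((i : ℕ) + 1 = p) := by omega
        have h2 : p + 1 = (i : ℕ) := by omega
        rw [ih.2 ⟨p, hpn⟩ rfl]
        simp only [Jtri, Matrix.of_apply]
        simp [h1, h2]
        rw [hi, pow_succ]
        ring
      · intro k _ hk
        by_cases h1 : (i : ℕ) + 1 = (k : ℕ)
        · rw [ih.1 k (by omega)]; ring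
        · have h2 : ¬((k : ℕ) + 1 = (i : ℕ)) := by
            intro h
            exact hk (Fin.ext (show (k:ℕ) = p by omega))
          simp [Jtri, h1, h2]
      · intro h; exact absurd (Finset.mem_univ _) h

lemma detK_ne (hn : 0 < n) (hm : 0 < m) :
    ((kalmanMatrix (Jtri n * 1) (B0 n m)).submatrix id
      (fun p : Fin n => (p, (⟨0, hm⟩ : Fin m)))).det ≠ 0 := by
  set M := (kalmanMatrix (Jtri n * 1) (B0 n m)).submatrix id
      (fun p : Fin n => (p, (⟨0, hm⟩ : Fin m))) with hMdef
  have hM : ∀ i p : Fin n, M i p = (Jtri n ^ (p : ℕ)) i ⟨0, hn⟩ := by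
    intro i p
    show (kalmanMatrix (Jtri n * 1) (B0 n m)) i (p, ⟨0, hm⟩) = _
    rw [kalmanMatrix]
    simp only [Matrix.of_apply, mul_one]
    rw [Matrix.mul_apply, Finset.sum_eq_single (⟨0, hn⟩ : Fin n)]
    · simp [B0]
    · intro k _ hk
      have : ¬((k : ℕ) = 0) := fun h => hk (Fin.ext h)
      simp [B0, this]
    · intro h; exact absurd (Finset.mem_univ _) h
  have htri : M.BlockTriangular id := by
    intro i j hij
    exact hM i j ▸ (Jtri_pow hn (j : ℕ)).1 i hij
  rw [Matrix.det_of_upperTriangular htri]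
  apply Finset.prod_ne_zero_iff.2
  intro i _
  rw [hM, (Jtri_pow hn (i : ℕ)).2 i rfl]
  exact pow_ne_zero _ (by norm_num)

lemma posDef_smul {H : Matrix (Fin n) (Fin n) ℝ} (hH : H.PosDef) {c : ℝ} (hc : 0 < c) :
    (c • H).PosDef := by
  refine ⟨?_, fun x hx => ?_⟩
  · unfold Matrix.IsHermitian
    rw [Matrix.conjTranspose_smul, star_trivial, hH.1]
  · exact (hH.smul hc).2 hx

lemma eval_line {N : ℕ} (q : MvPolynomial (Fin N) ℝ) (a d : Fin N → ℝ) (t : ℝ) :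
    Polynomial.eval t (MvPolynomial.eval₂ Polynomial.C
      (fun k => Polynomial.C (a k) + Polynomial.C (d k) * Polynomial.X) q)
    = MvPolynomial.eval (fun k => a k + d k * t) q := by
  rw [MvPolynomial.polynomial_eval_eval₂]
  have h : (Polynomial.evalRingHom t).comp Polynomial.C = RingHom.id ℝ := by
    ext r; simp
  rw [h, MvPolynomial.eval₂_id]
  have h2 : (fun s => Polynomial.eval t (Polynomial.C (a s) + Polynomial.C (d s) * Polynomial.X))
      = fun k => a k + d k * t := by
    funext k; simp
  rw [h2]

lemma zero_mem_closure_good (p : Polynomial ℝ) (hp : p ≠ 0) :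
    (0:ℝ) ∈ closure (Set.Ioo (0:ℝ) 1 \ {t | p.IsRoot t}) := by
  rw [Metric.mem_closure_iff]
  intro ε hε
  have hinf : (Set.Ioo (0:ℝ) (min ε 1)).Infinite := Set.Ioo_infinite (lt_min hε one_pos)
  obtain ⟨b, hb⟩ := (hinf.diff (Polynomial.finite_setOf_isRoot hp)).nonempty
  refine ⟨b, ⟨⟨hb.1.1, lt_of_lt_of_le hb.1.2 (min_le_right _ _)⟩, hb.2⟩, ?_⟩
  rw [Real.dist_eq, zero_sub, abs_neg, abs_of_pos hb.1.1]
  exact lt_of_lt_of_le hb.1.2 (min_le_left _ _)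

end PHAux

/-- The set of controllable port-Hamiltonian systems is relative generic in the
set of all port-Hamiltonian systems, both viewed as subsets of `ℝ^N` via the
coordinate isomorphism `T` of `PHT_{n,m}` with `ℝ^N`. -/
theorem controllable_relativeGeneric_in_PH (n m : ℕ) (hn : 0 < n) (hm : 0 < m)
    (N : ℕ) (hN : N = n * (n - 1) / 2 + n * (n + 1) / 2 + n * m)
    (T : ↥(PHT n m) ≃ₗ[ℝ] (Fin N → ℝ)) :
    IsRelativeGeneric
      ((fun x : ↥(PHT n m) => T x) ''
        {x : ↥(PHT n m) | ((x : MatrixTriple n m).2.1).PosDef ∧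
          Controllable ((x : MatrixTriple n m).1 * (x : MatrixTriple n m).2.1)
            (x : MatrixTriple n m).2.2})
      ((fun x : ↥(PHT n m) => T x) ''
        {x : ↥(PHT n m) | ((x : MatrixTriple n m).2.1).PosDef}) := by
  classical
  set L : (Fin N → ℝ) →ₗ[ℝ] MatrixTriple n m :=
    (PHT n m).subtype.comp T.symm.toLinearMap with hLdef
  have hL : ∀ y : ↥(PHT n m), L (T y) = (y : MatrixTriple n m) := by
    intro y; simp [hLdef]
  have y0mem : ((PHAux.Jtri n, (1 : Matrix (Fin n) (Fin n) ℝ), PHAux.B0 n m) :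
      MatrixTriple n m) ∈ PHT n m :=
    ⟨PHAux.Jtri_skew, Matrix.transpose_one⟩
  set y0 : ↥(PHT n m) := ⟨_, y0mem⟩ with hy0def
  have hq0 : MvPolynomial.eval (T y0) (PHAux.qPoly L) ≠ 0 := by
    rw [PHAux.eval_qPoly, hL y0]
    refine ne_of_gt (Finset.sum_pos' (fun c _ => sq_nonneg _)
      ⟨fun p => (p, ⟨0, hm⟩), Finset.mem_univ _, ?_⟩)
    have hd := PHAux.detK_ne (n := n) (m := m) hn hm
    exact lt_of_le_of_ne (sq_nonneg _) (Ne.symm (pow_ne_zero 2 hd))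
  refine ⟨{x | MvPolynomial.eval x (PHAux.qPoly L) = 0}, ⟨⟨1, fun _ => PHAux.qPoly L, ?_⟩, ?_⟩,
    ?_, ?_⟩
  · ext x; exact ⟨fun h _ => h, fun h => h 0⟩
  · intro h
    exact hq0 (Set.eq_univ_iff_forall.mp h (T y0))
  · rintro x ⟨⟨y, hy, rfl⟩, hxS⟩
    show MvPolynomial.eval ((fun x : ↥(PHT n m) => T x) y) (PHAux.qPoly L) = 0
    by_contra h
    have hctrl := PHAux.controllable_of_eval_ne L h
    rw [hL y] at hctrl
    exact hxS ⟨y, ⟨hy, hctrl⟩, rfl⟩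
  · rintro x ⟨y, hy, rfl⟩
    set d : Fin N → ℝ := fun k => T y0 k - T y k with hd
    set φ : ℝ → (Fin N → ℝ) := fun t k => T y k + d k * t with hφdef
    have hφ : ∀ t : ℝ, φ t = T (y + t • (y0 - y)) := by
      intro t; funext k
      rw [hφdef]
      simp only [map_add, _root_.map_smul, map_sub, Pi.add_apply, Pi.smul_apply, Pi.sub_apply,
        smul_eq_mul, hd]
      ring
    set P : Polynomial ℝ := MvPolynomial.eval₂ Polynomial.C
      (fun k => Polynomial.C (T y k) + Polynomial.C (d k) * Polynomial.X)
      (PHAux.qPoly L) with hPdef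
    have hPeval : ∀ t, Polynomial.eval t P = MvPolynomial.eval (φ t) (PHAux.qPoly L) := by
      intro t
      rw [hPdef, PHAux.eval_line, hφdef]
    have hP1 : Polynomial.eval 1 P ≠ 0 := by
      rw [hPeval 1]
      have h1 : φ 1 = T y0 := by
        funext k; rw [hφdef]; simp [hd]
      rw [h1]; exact hq0
    have hPne : P ≠ 0 := fun h => hP1 (by rw [h]; simp)
    have h0cl := PHAux.zero_mem_closure_good P hPne
    have hcont : Continuous φ := by
      apply continuous_pi
      intro k
      exact continuous_const.add (continuous_const.mul continuous_id)
    have himg : φ '' (Set.Ioo (0:ℝ) 1 \ {t | P.IsRoot t}) ⊆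
        ((fun x : ↥(PHT n m) => T x) '' {x : ↥(PHT n m) | ((x : MatrixTriple n m).2.1).PosDef})
          ∩ {x | MvPolynomial.eval x (PHAux.qPoly L) = 0}ᶜ := by
      rintro _ ⟨t, ht, rfl⟩
      constructor
      · refine ⟨y + t • (y0 - y), ?_, (hφ t).symm⟩
        show (((y + t • (y0 - y) : ↥(PHT n m)) : MatrixTriple n m)).2.1.PosDef
        have hcoe : (((y + t • (y0 - y) : ↥(PHT n m)) : MatrixTriple n m)).2.1
            = (1 - t) • ((y : MatrixTriple n m)).2.1
              + t • (1 : Matrix (Fin n) (Fin n) ℝ) := by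
          show ((y : MatrixTriple n m)).2.1
              + t • ((1 : Matrix (Fin n) (Fin n) ℝ) - ((y : MatrixTriple n m)).2.1) = _
          rw [smul_sub, sub_smul, one_smul]
          abel
        rw [hcoe]
        have ht1 : (0:ℝ) < 1 - t := by have := ht.1.2; linarith
        exact (PHAux.posDef_smul hy ht1).add (PHAux.posDef_smul Matrix.PosDef.one ht.1.1)
      · show ¬ (MvPolynomial.eval (φ t) (PHAux.qPoly L) = 0)
        rw [← hPeval t]
        exact ht.2
    have hx0 : (fun x : ↥(PHT n m) => T x) y = φ 0 := by
      funext k; rw [hφdef]; simp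
    rw [hx0]
    exact closure_mono himg (image_closure_subset_closure_image hcont ⟨0, h0cl, rfl⟩)
end

section
/- Let n, m be positive integers and N = n(n-1)/2 + n(n+1)/2 + nm. Identify the real vector space PHT_{n,m} of triples (J,H,B) (J skew-symmetric, H symmetric, B ∈ ℝ^{n×m}) with ℝ^N via the coordinate isomorphism T. Let ℙ be a probability measure on PHT_{n,m} whose pushforward under T is absolutely continuous with respect to the Lebesgue measure on ℝ^N, and assume ℙ(PH_{n,m}) = 1, where PH_{n,m} is the subset of PHT_{n,m} where H is positive definite. Then ℙ assigns measure 1 to the set of triples (J,H,B) ∈ PH_{n,m} such that the pair (JH, B) is controllable. -/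
open Set Matrix

open MeasureTheory

instance matrixMeasurableSpace {n m : ℕ} :
    MeasurableSpace (Matrix (Fin n) (Fin m) ℝ) :=
  inferInstanceAs (MeasurableSpace (Fin n → Fin m → ℝ))


section AuxiliaryLemmas


lemma finite_bad (Nn : ℕ) (P : Polynomial (MvPolynomial (Fin Nn) ℝ)) (hP : P ≠ 0) :
    {y : ℝ | Polynomial.eval (MvPolynomial.C y) P = 0}.Finite := by
  obtain ⟨d, hd⟩ := (MvPolynomial.ne_zero_iff).1 (Polynomial.leadingCoeff_ne_zero.2 hP)
  set q : Polynomial ℝ := ∑ k ∈ Finset.range (P.natDegree + 1),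
    Polynomial.C (MvPolynomial.coeff d (P.coeff k)) * Polynomial.X ^ k with hq
  have hqc : q.coeff P.natDegree = MvPolynomial.coeff d (P.coeff P.natDegree) := by
    rw [hq, Polynomial.finset_sum_coeff]
    rw [Finset.sum_eq_single P.natDegree]
    · simp
    · intro b _ hb
      rw [Polynomial.coeff_C_mul, Polynomial.coeff_X_pow, if_neg (Ne.symm hb), mul_zero]
    · simp
  have hqne : q ≠ 0 := fun h => hd (by simpa [h] using hqc.symm)
  apply Set.Finite.subset (Polynomial.finite_setOf_isRoot hqne)
  intro y hy
  have : MvPolynomial.coeff d (Polynomial.eval (MvPolynomial.C y) P) = Polynomial.eval y q := by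
    rw [Polynomial.eval_eq_sum_range, hq]
    simp only [Polynomial.eval_finset_sum, Polynomial.eval_mul, Polynomial.eval_C,
      Polynomial.eval_pow, Polynomial.eval_X]
    rw [MvPolynomial.coeff_sum]
    congr 1; ext k
    rw [← MvPolynomial.C_pow, mul_comm, MvPolynomial.coeff_C_mul, mul_comm]
  simp only [Set.mem_setOf_eq] at hy
  simp only [Polynomial.IsRoot, Set.mem_setOf_eq]
  rw [← this, hy, MvPolynomial.coeff_zero]

lemma measure_zeroSet_eq_zero :
    ∀ (Nn : ℕ) (p : MvPolynomial (Fin Nn) ℝ), p ≠ 0 →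
      (volume : Measure (Fin Nn → ℝ)) {x | MvPolynomial.eval x p = 0} = 0 := by
  intro Nn
  induction Nn with
  | zero =>
    intro p hp
    obtain ⟨c, rfl⟩ := MvPolynomial.C_surjective (Fin 0) p
    have hc : c ≠ 0 := fun h => hp (by simp [h])
    convert measure_empty
    · ext x; simp [hc]
    · infer_instance
  | succ N ih =>
    intro p hp
    set P : Polynomial (MvPolynomial (Fin N) ℝ) := MvPolynomial.finSuccEquiv ℝ N p with hPdef
    have hPne : P ≠ 0 := by
      intro h
      apply hp
      exact (EmbeddingLike.map_eq_zero_iff).1 h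
    set Z : Set (Fin (N + 1) → ℝ) := {x | MvPolynomial.eval x p = 0} with hZdef
    have hZm : MeasurableSet Z :=
      (isClosed_singleton.preimage (MvPolynomial.continuous_eval p)).measurableSet
    set e := MeasurableEquiv.piFinSuccAbove (fun _ : Fin (N + 1) => ℝ) 0 with hedef
    have hmp := (MeasureTheory.volume_preserving_piFinSuccAbove (fun _ : Fin (N + 1) => ℝ) 0).symm _
    have hvol : (volume : Measure (Fin (N+1) → ℝ)) Z
        = (volume : Measure (ℝ × (Fin N → ℝ))) (e.symm ⁻¹' Z) :=
      (hmp.measure_preimage hZm.nullMeasurableSet).symm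
    rw [hvol]
    have hSm : MeasurableSet (e.symm ⁻¹' Z) := e.symm.measurable hZm
    rw [MeasureTheory.Measure.volume_eq_prod, MeasureTheory.Measure.measure_prod_null hSm]
    have hsec : ∀ y : ℝ, ∀ s : Fin N → ℝ, ((y, s) ∈ e.symm ⁻¹' Z ↔
        MvPolynomial.eval s (Polynomial.eval (MvPolynomial.C y) P) = 0) := by
      intro y s
      have he : e.symm (y, s) = Fin.cons y s := by
        simp [hedef, MeasurableEquiv.piFinSuccAbove, Fin.insertNthEquiv]
      have h1 : MvPolynomial.eval (e.symm (y, s)) p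
          = MvPolynomial.eval s (Polynomial.eval (MvPolynomial.C y) P) := by
        rw [he, MvPolynomial.eval_eq_eval_mv_eval']
        rw [Polynomial.eval_map, ← hPdef]
        have : Polynomial.eval (MvPolynomial.C y) P
            = Polynomial.eval₂ (RingHom.id _) (MvPolynomial.C y) P := rfl
        rw [this, Polynomial.hom_eval₂]
        simp
      simp only [Set.mem_preimage, hZdef, Set.mem_setOf_eq, h1]
    have hbad : (volume : Measure ℝ) {y : ℝ | Polynomial.eval (MvPolynomial.C y) P = 0} = 0 :=
      (finite_bad N P hPne).measure_zero _
    filter_upwards [MeasureTheory.measure_eq_zero_iff_ae_notMem.mp hbad] with y hy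
    have hney : Polynomial.eval (MvPolynomial.C y) P ≠ 0 := hy
    have : (Prod.mk y ⁻¹' (e.symm ⁻¹' Z)) = {s | MvPolynomial.eval s
        (Polynomial.eval (MvPolynomial.C y) P) = 0} := by
      ext s; exact hsec y s
    simp only [this]
    exact ih _ hney


lemma rank_eq_card_iff_det {n : ℕ} (G : Matrix (Fin n) (Fin n) ℝ) :
    G.rank = n ↔ G.det ≠ 0 := by
  constructor
  · intro h
    have hr : LinearMap.range G.mulVecLin = ⊤ := by
      apply Submodule.eq_top_of_finrank_eq
      rw [← Matrix.rank, h, Module.finrank_pi]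
      simp
    have hsurj : Function.Surjective G.mulVec := by
      have h2 := LinearMap.range_eq_top.1 hr
      intro y
      obtain ⟨x, hx⟩ := h2 y
      exact ⟨x, by simpa using hx⟩
    have := Matrix.mulVec_surjective_iff_isUnit.1 hsurj
    exact (Matrix.isUnit_iff_isUnit_det G).1 this |>.ne_zero
  · intro h
    have : IsUnit G := (Matrix.isUnit_iff_isUnit_det G).2 (isUnit_iff_ne_zero.2 h)
    rw [Matrix.rank_of_isUnit G this, Fintype.card_fin]

lemma controllable_iff_det {n m : ℕ} (A : Matrix (Fin n) (Fin n) ℝ)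
    (B : Matrix (Fin n) (Fin m) ℝ) :
    Controllable A B ↔ (kalmanMatrix A B * (kalmanMatrix A B)ᵀ).det ≠ 0 := by
  rw [Controllable, ← Matrix.rank_self_mul_transpose, rank_eq_card_iff_det]


section example_sec
variable {n : ℕ}

def Jex (n : ℕ) : Matrix (Fin n) (Fin n) ℝ :=
  Matrix.of fun i j => if (i : ℕ) + 1 = j then 1 else if (j : ℕ) + 1 = i then -1 else 0

lemma Jex_skew (n : ℕ) : (Jex n)ᵀ = -(Jex n) := by
  ext i j
  simp only [Jex, transpose_apply, Matrix.neg_apply, of_apply]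
  split_ifs with h1 h2 h2 <;> first | ring1 | (exfalso; omega)

lemma Jex_mul_entry (hn : 0 < n) (w : Fin n → ℝ) (i : Fin n) :
    ∑ k : Fin n, Jex n i k * w k =
      (if h : (i : ℕ) + 1 < n then w ⟨(i : ℕ) + 1, h⟩ else 0)
      - (if h : 0 < (i : ℕ) then w ⟨(i : ℕ) - 1, lt_of_le_of_lt (Nat.sub_le _ _) i.isLt⟩ else 0) := by
  have hterm : ∀ k : Fin n, Jex n i k * w k =
      (if (i : ℕ) + 1 = (k : ℕ) then w k else 0) + (if (k : ℕ) + 1 = (i : ℕ) then -w k else 0) := by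
    intro k
    simp only [Jex, of_apply]
    split_ifs with h1 h2 <;> first | ring1 | (exfalso; omega)
  have hS1 : (∑ k : Fin n, if (i : ℕ) + 1 = (k : ℕ) then w k else 0)
      = (if h : (i : ℕ) + 1 < n then w ⟨(i : ℕ) + 1, h⟩ else 0) := by
    split_ifs with h
    · rw [Finset.sum_eq_single (⟨(i : ℕ) + 1, h⟩ : Fin n)]
      · simp
      · intro b _ hb
        exact if_neg fun hc => hb (Fin.ext hc.symm)
      · simp
    · exact Finset.sum_eq_zero fun b _ => if_neg fun hc => h (by omega)
  have hS2 : (∑ k : Fin n, if (k : ℕ) + 1 = (i : ℕ) then -w k else 0)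
      = -(if h : 0 < (i : ℕ) then w ⟨(i : ℕ) - 1, lt_of_le_of_lt (Nat.sub_le _ _) i.isLt⟩ else 0) := by
    split_ifs with h
    · rw [Finset.sum_eq_single (⟨(i : ℕ) - 1, lt_of_le_of_lt (Nat.sub_le _ _) i.isLt⟩ : Fin n)]
      · simp [Nat.sub_add_cancel h]
      · intro b _ hb
        refine if_neg fun hc => hb (Fin.ext ?_)
        show (b : ℕ) = (i : ℕ) - 1
        omega
      · simp
    · rw [Finset.sum_eq_zero, neg_zero]
      intro b _
      exact if_neg fun hc => h (by omega)
  rw [Finset.sum_congr rfl fun k _ => hterm k, Finset.sum_add_distrib, hS1, hS2]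
  ring

lemma Jex_pow_entry (hn : 0 < n) (j : ℕ) :
    (∀ i : Fin n, j < (i : ℕ) → ((Jex n) ^ j) i ⟨0, hn⟩ = 0)
    ∧ (∀ i : Fin n, (i : ℕ) = j → ((Jex n) ^ j) i ⟨0, hn⟩ = (-1) ^ j) := by
  induction j with
  | zero =>
    constructor
    · intro i hi
      rw [pow_zero]
      rw [Matrix.one_apply_ne]
      intro hc
      rw [hc] at hi
      simp at hi
    · intro i hi
      have : i = ⟨0, hn⟩ := Fin.ext (by simpa using hi)
      rw [pow_zero, this, Matrix.one_apply_eq]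
      simp
  | succ j ih =>
    have key : ∀ i : Fin n, ((Jex n) ^ (j + 1)) i ⟨0, hn⟩ =
        (if h : (i : ℕ) + 1 < n then ((Jex n) ^ j) ⟨(i : ℕ) + 1, h⟩ ⟨0, hn⟩ else 0)
        - (if h : 0 < (i : ℕ) then ((Jex n) ^ j) ⟨(i : ℕ) - 1,
            lt_of_le_of_lt (Nat.sub_le _ _) i.isLt⟩ ⟨0, hn⟩ else 0) := by
      intro i
      rw [pow_succ', Matrix.mul_apply]
      exact Jex_mul_entry hn _ i
    constructor
    · intro i hi
      rw [key i]
      have h1 : ∀ (h : (i : ℕ) + 1 < n), ((Jex n) ^ j) ⟨(i : ℕ) + 1, h⟩ ⟨0, hn⟩ = 0 := by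
        intro h
        exact ih.1 _ (by simp; omega)
      have h2 : ∀ (h : 0 < (i : ℕ)), ((Jex n) ^ j) ⟨(i : ℕ) - 1,
          lt_of_le_of_lt (Nat.sub_le _ _) i.isLt⟩ ⟨0, hn⟩ = 0 := by
        intro h
        exact ih.1 _ (by simp; omega)
      split_ifs with ha hb hb <;> simp [h1, h2, ha, hb] <;> first | (exact h1 ha) | (exact h2 hb) | skip
    · intro i hi
      rw [key i]
      have hipos : 0 < (i : ℕ) := by omega
      have h1 : ∀ (h : (i : ℕ) + 1 < n), ((Jex n) ^ j) ⟨(i : ℕ) + 1, h⟩ ⟨0, hn⟩ = 0 := by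
        intro h
        exact ih.1 _ (by simp; omega)
      have h2 : ((Jex n) ^ j) ⟨(i : ℕ) - 1, lt_of_le_of_lt (Nat.sub_le _ _) i.isLt⟩ ⟨0, hn⟩
          = (-1) ^ j := by
        apply ih.2
        simp
        omega
      rw [dif_pos hipos, h2]
      split_ifs with ha
      · rw [h1 ha]
        ring
      · ring

end example_sec

section ex2
variable {n m : ℕ}

lemma exists_controllable (n m : ℕ) (hn : 0 < n) (hm : 0 < m) :
    ∃ (J H : Matrix (Fin n) (Fin n) ℝ) (B : Matrix (Fin n) (Fin m) ℝ),
      Jᵀ = -J ∧ Hᵀ = H ∧ Controllable (J * H) B := by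
  set J := Jex n with hJ
  set B : Matrix (Fin n) (Fin m) ℝ :=
    Matrix.of fun i j => if (i : ℕ) = 0 ∧ (j : ℕ) = 0 then 1 else 0 with hB
  refine ⟨J, 1, B, Jex_skew n, by simp, ?_⟩
  rw [Controllable, mul_one]
  set K := kalmanMatrix J B with hK
  set z0 : Fin n := ⟨0, hn⟩ with hz0
  set M : Matrix (Fin n) (Fin n) ℝ := Matrix.of fun i j => (J ^ (j : ℕ)) i z0 with hM
  -- M = K * P for a selection matrix P
  set P : Matrix (Fin n × Fin m) (Fin n) ℝ :=
    Matrix.of fun p j => if p = (j, ⟨0, hm⟩) then 1 else 0 with hP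
  have hKP : K * P = M := by
    ext i j
    rw [Matrix.mul_apply]
    rw [Finset.sum_eq_single ((j, ⟨0, hm⟩) : Fin n × Fin m)]
    · have : K i (j, ⟨0, hm⟩) = (J ^ (j : ℕ) * B) i ⟨0, hm⟩ := rfl
      simp only [hP, of_apply, if_pos rfl, mul_one, this]
      rw [Matrix.mul_apply]
      rw [Finset.sum_eq_single z0]
      · simp [hB, hM, hz0]
      · intro b _ hb
        have hb0 : (b : ℕ) ≠ 0 := fun h => hb (Fin.ext (by simpa using h))
        simp [hB, hb0]
      · simp
    · intro b _ hb
      simp [hP, hb]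
    · simp
  -- M is upper triangular with diagonal (-1)^i
  have hMd : M.det ≠ 0 := by
    have htri : M.BlockTriangular id := by
      intro i j hij
      exact (Jex_pow_entry hn (j : ℕ)).1 i hij
    rw [Matrix.det_of_upperTriangular htri]
    apply Finset.prod_ne_zero_iff.2
    intro i _
    have := (Jex_pow_entry hn (i : ℕ)).2 i rfl
    simp only [hM, of_apply, this]
    show (Jex n ^ (i : ℕ)) i ⟨0, hn⟩ ≠ 0
    rw [this]
    exact pow_ne_zero _ (by norm_num)
  have hMrank : M.rank = n := by
    rw [Matrix.rank_of_isUnit M ((Matrix.isUnit_iff_isUnit_det M).2 (isUnit_iff_ne_zero.2 hMd))]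
    exact Fintype.card_fin n
  have h1 : M.rank ≤ K.rank := hKP ▸ Matrix.rank_mul_le_left K P
  have h2 : K.rank ≤ n := by
    have := Matrix.rank_le_card_height K
    simpa using this
  omega

end ex2


noncomputable def linPoly {N : ℕ} (φ : (Fin N → ℝ) →ₗ[ℝ] ℝ) : MvPolynomial (Fin N) ℝ :=
  ∑ k, MvPolynomial.C (φ (Pi.single k 1)) * MvPolynomial.X k

lemma eval_linPoly {N : ℕ} (φ : (Fin N → ℝ) →ₗ[ℝ] ℝ) (x : Fin N → ℝ) :
    MvPolynomial.eval x (linPoly φ) = φ x := by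
  have hx : x = ∑ k, x k • (Pi.single k 1 : Fin N → ℝ) := by
    conv_lhs => rw [← Finset.univ_sum_single x]
    refine Finset.sum_congr rfl fun k _ => ?_
    rw [← Pi.single_smul, smul_eq_mul, mul_one]
  conv_rhs => rw [hx]
  rw [map_sum]
  rw [linPoly, map_sum]
  refine Finset.sum_congr rfl fun k _ => ?_
  simp [mul_comm]

lemma exists_kalman_poly (n m N : ℕ) (E : (Fin N → ℝ) →ₗ[ℝ] MatrixTriple n m) :
    ∃ g : MvPolynomial (Fin N) ℝ, ∀ x, MvPolynomial.eval x g =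
      (kalmanMatrix ((E x).1 * (E x).2.1) (E x).2.2 *
        (kalmanMatrix ((E x).1 * (E x).2.1) (E x).2.2)ᵀ).det := by
  classical
  let entJ : Fin n → Fin n → ((Fin N → ℝ) →ₗ[ℝ] ℝ) := fun i j =>
    { toFun := fun x => (E x).1 i j
      map_add' := by intros; simp [map_add]
      map_smul' := by intros; simp [_root_.map_smul] }
  let entH : Fin n → Fin n → ((Fin N → ℝ) →ₗ[ℝ] ℝ) := fun i j =>
    { toFun := fun x => (E x).2.1 i j
      map_add' := by intros; simp [map_add]
      map_smul' := by intros; simp [_root_.map_smul] }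
  let entB : Fin n → Fin m → ((Fin N → ℝ) →ₗ[ℝ] ℝ) := fun i j =>
    { toFun := fun x => (E x).2.2 i j
      map_add' := by intros; simp [map_add]
      map_smul' := by intros; simp [_root_.map_smul] }
  let PJ : Matrix (Fin n) (Fin n) (MvPolynomial (Fin N) ℝ) :=
    Matrix.of fun i j => linPoly (entJ i j)
  let PH : Matrix (Fin n) (Fin n) (MvPolynomial (Fin N) ℝ) :=
    Matrix.of fun i j => linPoly (entH i j)
  let PB : Matrix (Fin n) (Fin m) (MvPolynomial (Fin N) ℝ) :=
    Matrix.of fun i j => linPoly (entB i j)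
  let KP : Matrix (Fin n) (Fin n × Fin m) (MvPolynomial (Fin N) ℝ) :=
    Matrix.of fun i p => (((PJ * PH) ^ (p.1 : ℕ)) * PB) i p.2
  refine ⟨(KP * KPᵀ).det, fun x => ?_⟩
  set ev : MvPolynomial (Fin N) ℝ →+* ℝ := (MvPolynomial.eval x : MvPolynomial (Fin N) ℝ →+* ℝ)
  have hJ : PJ.map ev = (E x).1 := by
    ext i j
    exact eval_linPoly (entJ i j) x
  have hH : PH.map ev = (E x).2.1 := by
    ext i j
    exact eval_linPoly (entH i j) x
  have hB : PB.map ev = (E x).2.2 := by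
    ext i j
    exact eval_linPoly (entB i j) x
  have hKmap : KP.map ev = kalmanMatrix ((E x).1 * (E x).2.1) (E x).2.2 := by
    have hmul : ∀ p1 : Fin n, (((PJ * PH) ^ (p1 : ℕ)) * PB).map ev =
        (((E x).1 * (E x).2.1) ^ (p1 : ℕ)) * (E x).2.2 := by
      intro p1
      rw [Matrix.map_mul, hB]
      congr 1
      have hpow := map_pow (ev.mapMatrix) (PJ * PH) (p1 : ℕ)
      simp only [RingHom.mapMatrix_apply] at hpow
      rw [hpow, Matrix.map_mul, hJ, hH]
    ext i p
    have := congrFun (congrFun (hmul p.1) i) p.2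
    exact this
  show ev ((KP * KPᵀ).det) = _
  rw [RingHom.map_det, RingHom.mapMatrix_apply, Matrix.map_mul, Matrix.transpose_map, hKmap]


instance matrixBorelSpace {n m : ℕ} : BorelSpace (Matrix (Fin n) (Fin m) ℝ) :=
  inferInstanceAs (BorelSpace (Fin n → Fin m → ℝ))

instance matrixSecondCountable {n m : ℕ} :
    SecondCountableTopology (Matrix (Fin n) (Fin m) ℝ) :=
  inferInstanceAs (SecondCountableTopology (Fin n → Fin m → ℝ))

set_option synthInstance.maxHeartbeats 1000000 in
instance submoduleOpensMeasurable (n m : ℕ) (S : Submodule ℝ (MatrixTriple n m)) :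
    OpensMeasurableSpace ↥S :=
  inferInstanceAs (OpensMeasurableSpace ↥(SetLike.coe S))

end AuxiliaryLemmas

/-- A random, continuously distributed port-Hamiltonian system is almost surely
controllable: if `ℙ` is a probability measure on `PHT_{n,m}` whose pushforward
under the coordinate isomorphism `T` is absolutely continuous with respect to
the Lebesgue measure on `ℝ^N`, and `ℙ(PH_{n,m}) = 1`, then the set of
controllable port-Hamiltonian systems has `ℙ`-measure one. -/
theorem almost_surely_controllable (n m : ℕ) (hn : 0 < n) (hm : 0 < m)
    (N : ℕ) (hN : N = n * (n - 1) / 2 + n * (n + 1) / 2 + n * m)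
    (T : ↥(PHT n m) ≃ₗ[ℝ] (Fin N → ℝ))
    (ℙ : Measure ↥(PHT n m)) [IsProbabilityMeasure ℙ]
    (habs : Measure.map (fun x : ↥(PHT n m) => T x) ℙ ≪ (volume : Measure (Fin N → ℝ)))
    (hPH : ℙ {x : ↥(PHT n m) | ((x : MatrixTriple n m).2.1).PosDef} = 1) :
    ℙ {x : ↥(PHT n m) | ((x : MatrixTriple n m).2.1).PosDef ∧
        Controllable ((x : MatrixTriple n m).1 * (x : MatrixTriple n m).2.1)
          (x : MatrixTriple n m).2.2} = 1 := by
    classical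
  set E : (Fin N → ℝ) →ₗ[ℝ] MatrixTriple n m :=
    (PHT n m).subtype.comp (T.symm : (Fin N → ℝ) →ₗ[ℝ] ↥(PHT n m)) with hE
  obtain ⟨g, hg⟩ := exists_kalman_poly n m N E
  obtain ⟨J, H, B, hJs, hHs, hc⟩ := exists_controllable n m hn hm
  have hmem : ((J, H, B) : MatrixTriple n m) ∈ PHT n m := ⟨hJs, hHs⟩
  have hgne : g ≠ 0 := by
    intro h0
    have hx := hg (T ⟨(J, H, B), hmem⟩)
    have hEx : E (T (⟨(J, H, B), hmem⟩ : ↥(PHT n m))) = ((J, H, B) : MatrixTriple n m) := by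
      simp [hE]
    rw [h0, hEx, map_zero] at hx
    exact (controllable_iff_det _ _).1 hc hx.symm
  set Z : Set (Fin N → ℝ) := {z | MvPolynomial.eval z g = 0} with hZ
  have hZm : MeasurableSet Z :=
    (isClosed_singleton.preimage (MvPolynomial.continuous_eval g)).measurableSet
  have hvolZ : (volume : Measure (Fin N → ℝ)) Z = 0 := measure_zeroSet_eq_zero N g hgne
  have hmapZ : Measure.map (fun x : ↥(PHT n m) => T x) ℙ Z = 0 := habs hvolZ
  have hTmeas : Measurable fun x : ↥(PHT n m) => T x := by
    have hcont : Continuous fun x : ↥(PHT n m) => T x :=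
      (T : ↥(PHT n m) →ₗ[ℝ] (Fin N → ℝ)).continuous_of_finiteDimensional
    exact hcont.measurable
  have hpre : ℙ ((fun x : ↥(PHT n m) => T x) ⁻¹' Z) = 0 := by
    rw [Measure.map_apply hTmeas hZm] at hmapZ
    exact hmapZ
  set NC : Set ↥(PHT n m) := {x : ↥(PHT n m) |
    ¬ Controllable ((x : MatrixTriple n m).1 * (x : MatrixTriple n m).2.1)
      (x : MatrixTriple n m).2.2} with hNCdef
  have hNC : NC = (fun x : ↥(PHT n m) => T x) ⁻¹' Z := by
    ext x
    have hEx : E (T x) = (x : MatrixTriple n m) := by simp [hE]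
    have hgx := hg (T x)
    rw [hEx] at hgx
    simp only [hNCdef, Set.mem_setOf_eq, Set.mem_preimage, hZ, hgx]
    rw [controllable_iff_det, not_not]
  have hNCzero : ℙ NC = 0 := by rw [hNC]; exact hpre
  set Tgt : Set ↥(PHT n m) := {x : ↥(PHT n m) | ((x : MatrixTriple n m).2.1).PosDef ∧
      Controllable ((x : MatrixTriple n m).1 * (x : MatrixTriple n m).2.1)
        (x : MatrixTriple n m).2.2} with hTgt
  have hsub : {x : ↥(PHT n m) | ((x : MatrixTriple n m).2.1).PosDef} ⊆ Tgt ∪ NC := by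
    intro x hx
    by_cases hcx : Controllable ((x : MatrixTriple n m).1 * (x : MatrixTriple n m).2.1)
      (x : MatrixTriple n m).2.2
    · exact Or.inl ⟨hx, hcx⟩
    · exact Or.inr hcx
  have hle : (1 : ENNReal) ≤ ℙ Tgt := by
    calc (1 : ENNReal) = ℙ {x : ↥(PHT n m) | ((x : MatrixTriple n m).2.1).PosDef} := hPH.symm
      _ ≤ ℙ (Tgt ∪ NC) := measure_mono hsub
      _ ≤ ℙ Tgt + ℙ NC := measure_union_le _ _
      _ = ℙ Tgt := by rw [hNCzero, add_zero]
  exact le_antisymm prob_le_one hle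
end

section
/- The converse of the preceding proposition fails: there exist sets S, V ⊆ ℝ (with N = 1), namely V = {x ∈ ℝ : x > 0} and S the intersection with V of the union over i ∈ ℕ* of the open intervals (φ(i) − 1/i², φ(i) + 1/i²) for a surjection φ: ℕ* → V ∩ ℚ, such that V ∩ Sᶜ is nowhere dense in V but S is not relative generic in V. -/
open Set

/-- An algebraic variety in `ℝ` (one indeterminate). -/
def IsAlgebraicVariety₁ (W : Set ℝ) : Prop :=
  ∃ (k : ℕ) (p : Fin k → Polynomial ℝ), W = {x | ∀ i, (p i).eval x = 0}

/-- A proper algebraic variety in `ℝ`. -/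
def IsProperAlgebraicVariety₁ (W : Set ℝ) : Prop :=
  IsAlgebraicVariety₁ W ∧ W ≠ Set.univ

/-- `S` is relative generic in `V` (subsets of `ℝ`). -/
def IsRelativeGeneric₁ (S V : Set ℝ) : Prop :=
  ∃ W : Set ℝ, IsProperAlgebraicVariety₁ W ∧ V ∩ Sᶜ ⊆ W ∧ V ⊆ closure (V ∩ Wᶜ)

/-- The converse of the nowhere-density proposition fails: with `V = (0,∞)` and
`S` the union of the intervals `(φ(i) - 1/i², φ(i) + 1/i²)` intersected with `V`,
for a surjection `φ : ℕ* → V ∩ ℚ`, the set `V ∩ Sᶜ` is nowhere dense in `V`,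
but `S` is not relative generic in `V`. -/
theorem not_relativeGeneric_of_nowhereDense (φ : ℕ+ → ℝ)
    (hmem : ∀ i : ℕ+, φ i ∈ {x : ℝ | 0 < x ∧ ∃ q : ℚ, (q : ℝ) = x})
    (hsurj : ∀ x ∈ {x : ℝ | 0 < x ∧ ∃ q : ℚ, (q : ℝ) = x}, ∃ i : ℕ+, φ i = x)
    (S : Set ℝ)
    (hS : S = (⋃ i : ℕ+, Ioo (φ i - 1 / ((i : ℕ) : ℝ) ^ 2)
      (φ i + 1 / ((i : ℕ) : ℝ) ^ 2)) ∩ Ioi (0 : ℝ)) :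
    interior (closure ((Subtype.val ⁻¹' (Ioi (0 : ℝ) ∩ Sᶜ)) : Set ↥(Ioi (0 : ℝ)))) = ∅ ∧
      ¬ IsRelativeGeneric₁ S (Ioi (0 : ℝ)) := by
  -- S is open
  have hSopen : IsOpen S := by
    rw [hS]; exact (isOpen_iUnion fun i => isOpen_Ioo).inter isOpen_Ioi
  -- positive rationals are in S
  have hrat : ∀ q : ℚ, (0:ℝ) < q → (q:ℝ) ∈ S := by
    intro q hq
    obtain ⟨i, hi⟩ := hsurj q ⟨hq, q, rfl⟩
    rw [hS]
    have hpos : (0:ℝ) < 1 / ((i:ℕ):ℝ)^2 := by positivity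
    exact ⟨mem_iUnion.2 ⟨i, by rw [hi]; constructor <;> linarith⟩, hq⟩
  -- the preimage of S in the subtype is dense
  have hdense : Dense ((Subtype.val ⁻¹' S) : Set ↥(Ioi (0 : ℝ))) := by
    rw [dense_iff_inter_open]
    rintro U hU ⟨⟨x, hx⟩, hxU⟩
    obtain ⟨O, hO, rfl⟩ := isOpen_induced_iff.1 hU
    obtain ⟨ε, hε, hball⟩ := Metric.isOpen_iff.1 hO x hxU
    have hx0 : (0:ℝ) < x := hx
    have hlt : x - min ε x < x := by
      have : (0:ℝ) < min ε x := lt_min hε hx0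
      linarith
    obtain ⟨q, hq1, hq2⟩ := exists_rat_btwn hlt
    have hqpos : (0:ℝ) < q := by
      have : x - min ε x ≥ x - x := by
        have := min_le_right ε x; linarith
      linarith
    have hqball : (q:ℝ) ∈ Metric.ball x ε := by
      rw [Metric.mem_ball, Real.dist_eq, abs_lt]
      have := min_le_left ε x
      constructor <;> linarith
    exact ⟨⟨(q:ℝ), hqpos⟩, ⟨hball hqball, hrat q hqpos⟩⟩
  constructor
  · -- nowhere density part
    have hpre : ((Subtype.val ⁻¹' (Ioi (0 : ℝ) ∩ Sᶜ)) : Set ↥(Ioi (0 : ℝ)))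
        = ((Subtype.val ⁻¹' S) : Set ↥(Ioi (0 : ℝ)))ᶜ := by
      ext ⟨x, hx⟩
      simp [hx]
    rw [hpre, IsClosed.closure_eq (hSopen.preimage continuous_subtype_val).isClosed_compl,
      interior_eq_empty_iff_dense_compl, compl_compl]
    exact hdense
  · -- not relative generic
    rintro ⟨W, ⟨⟨k, p, hW⟩, hWne⟩, hsub, -⟩
    -- W is finite
    have hWfin : W.Finite := by
      have : ∃ x, x ∉ W := by
        by_contra h
        push_neg at h
        exact hWne (eq_univ_of_forall h)
      obtain ⟨x, hxW⟩ := this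
      rw [hW] at hxW
      simp only [mem_setOf_eq, not_forall] at hxW
      obtain ⟨i, hi⟩ := hxW
      have hpne : p i ≠ 0 := fun h => hi (by simp [h])
      refine Set.Finite.subset (Polynomial.finite_setOf_isRoot hpne) ?_
      intro y hy
      rw [hW] at hy
      exact hy i
    -- volume of S is finite
    have hvol : MeasureTheory.volume S < ⊤ := by
      rw [hS]
      calc MeasureTheory.volume ((⋃ i : ℕ+, Ioo (φ i - 1 / ((i : ℕ) : ℝ) ^ 2)
            (φ i + 1 / ((i : ℕ) : ℝ) ^ 2)) ∩ Ioi (0 : ℝ))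
          ≤ MeasureTheory.volume (⋃ i : ℕ+, Ioo (φ i - 1 / ((i : ℕ) : ℝ) ^ 2)
            (φ i + 1 / ((i : ℕ) : ℝ) ^ 2)) := MeasureTheory.measure_mono inter_subset_left
        _ ≤ ∑' i : ℕ+, MeasureTheory.volume (Ioo (φ i - 1 / ((i : ℕ) : ℝ) ^ 2)
            (φ i + 1 / ((i : ℕ) : ℝ) ^ 2)) := MeasureTheory.measure_iUnion_le _
        _ = ∑' i : ℕ+, ENNReal.ofReal (2 / ((i:ℕ):ℝ)^2) := by
            congr 1; funext i; rw [Real.volume_Ioo]; congr 1; ring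
        _ < ⊤ := by
            have hsum : Summable (fun i : ℕ+ => 2 / ((i:ℕ):ℝ)^2) := by
              have h1 : Summable (fun n : ℕ => 2 * (1 / (n:ℝ)^2)) :=
                (Real.summable_one_div_nat_pow.2 one_lt_two).mul_left 2
              have h2 := h1.comp_injective (fun a b h => PNat.coe_injective h :
                Function.Injective (fun i : ℕ+ => (i : ℕ)))
              simpa [Function.comp_def, mul_one_div, div_eq_mul_inv] using h2
            rw [← ENNReal.ofReal_tsum_of_nonneg (fun i => by positivity) hsum]
            exact ENNReal.ofReal_lt_top
    -- Ioi 0 ⊆ S ∪ W, contradiction with infinite volume of Ioi 0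
    have hcover : Ioi (0:ℝ) ⊆ S ∪ W := by
      intro x hx
      by_cases hxS : x ∈ S
      · exact Or.inl hxS
      · exact Or.inr (hsub ⟨hx, hxS⟩)
    have hWvol : MeasureTheory.volume W = 0 := hWfin.measure_zero _
    have : MeasureTheory.volume (Ioi (0:ℝ)) < ⊤ := by
      calc MeasureTheory.volume (Ioi (0:ℝ))
          ≤ MeasureTheory.volume (S ∪ W) := MeasureTheory.measure_mono hcover
        _ ≤ MeasureTheory.volume S + MeasureTheory.volume W := MeasureTheory.measure_union_le _ _
        _ < ⊤ := by rw [hWvol, add_zero]; exact hvol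
    rw [Real.volume_Ioi] at this
    exact absurd this (lt_irrefl ⊤)
end

section
/- Let 𝔽 be ℝ or ℂ and let S, V ⊆ 𝔽^N be arbitrary sets. If V is open and S ∩ V = S' ∩ V for some generic set S' ⊆ 𝔽^N, then S is relative generic in V. -/
open Set Matrix

/-- If `V` is open and `S ∩ V = S' ∩ V` for some generic set `S'`, then `S` is
relative generic in `V`. -/
theorem relativeGeneric_of_generic_inter {𝕜 : Type*} [RCLike 𝕜] {N : ℕ}
    (S V S' : Set (Fin N → 𝕜)) (hV : IsOpen V) (hS' : IsGeneric S')
    (hSV : S ∩ V = S' ∩ V) :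
    IsRelativeGeneric S V := by
  obtain ⟨W, ⟨⟨k, p, rfl⟩, hne⟩, hsub⟩ := hS'
  -- find a witness point and index where some polynomial is nonzero
  have : ∃ y, ∃ i, MvPolynomial.eval y (p i) ≠ 0 := by
    by_contra h
    push_neg at h
    exact hne (Set.eq_univ_of_forall fun y => h y)
  obtain ⟨y, i, hy⟩ := this
  refine ⟨{x | MvPolynomial.eval x (p i) = 0}, ⟨⟨1, fun _ => p i, by ext x; simp⟩, ?_⟩, ?_, ?_⟩
  · intro h
    exact hy (by have := h ▸ Set.mem_univ y; exact this)
  · intro v ⟨hvV, hvS⟩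
    have hvS' : v ∉ S' := by
      intro hvS'
      exact hvS (Set.inter_subset_left (hSV ▸ Set.mem_inter hvS' hvV))
    exact hsub hvS' i
  · have hdense : Dense {x : Fin N → 𝕜 | MvPolynomial.eval x (p i) ≠ 0} := by
      intro x
      rw [Metric.mem_closure_iff]
      intro ε hε
      -- restrict to the line through x and y
      set q : Polynomial 𝕜 := MvPolynomial.eval₂ Polynomial.C
        (fun j => Polynomial.C (x j) + Polynomial.X * Polynomial.C (y j - x j)) (p i) with hq
      have hqeval : ∀ t : 𝕜, Polynomial.eval t q =
          MvPolynomial.eval (fun j => x j + t * (y j - x j)) (p i) := by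
        intro t
        rw [hq, show Polynomial.eval t (MvPolynomial.eval₂ Polynomial.C
          (fun j => Polynomial.C (x j) + Polynomial.X * Polynomial.C (y j - x j)) (p i)) =
          (Polynomial.evalRingHom t) (MvPolynomial.eval₂ Polynomial.C
          (fun j => Polynomial.C (x j) + Polynomial.X * Polynomial.C (y j - x j)) (p i)) from rfl,
          MvPolynomial.eval₂_comp_left]
        have hc : (Polynomial.evalRingHom t).comp Polynomial.C = RingHom.id 𝕜 := by
          ext a; simp
        rw [hc]
        have hg : (⇑(Polynomial.evalRingHom t) ∘ fun j =>
            Polynomial.C (x j) + Polynomial.X * Polynomial.C (y j - x j)) =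
            fun j => x j + t * (y j - x j) := by
          funext j; simp
        rw [hg]
        rfl
      have hq1 : Polynomial.eval 1 q ≠ 0 := by
        rw [hqeval]
        have : (fun j => x j + 1 * (y j - x j)) = y := by funext j; ring
        rw [this]; exact hy
      have hqne : q ≠ 0 := fun h => hq1 (by simp [h])
      have hroots : {t : 𝕜 | Polynomial.IsRoot q t}.Finite := Polynomial.finite_setOf_isRoot hqne
      -- pick t = (2:𝕜)⁻¹ ^ n for suitable n
      have hnorm2 : ‖(2:𝕜)⁻¹‖ = (2:ℝ)⁻¹ := by
        rw [norm_inv]; norm_num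
      have hinj : Function.Injective (fun n : ℕ => ((2:𝕜)⁻¹) ^ n) := by
        intro a b hab
        have h := congrArg (fun z : 𝕜 => ‖z‖) hab
        simp only [norm_pow, hnorm2] at h
        exact (pow_right_strictAnti₀ (by norm_num) (by norm_num : (2:ℝ)⁻¹ < 1)).injective h
      set M : ℝ := ‖y - x‖ + 1 with hM
      have hMle : ∀ j, ‖y j - x j‖ ≤ M := fun j =>
        le_trans (norm_le_pi_norm (y - x) j) (le_add_of_nonneg_right zero_le_one)
      have hev1 : ∀ᶠ n in Filter.atTop, ((2:ℝ)⁻¹) ^ n * M < ε := by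
        have := Filter.Tendsto.mul_const M
          (tendsto_pow_atTop_nhds_zero_of_lt_one (by norm_num) (by norm_num : (2:ℝ)⁻¹ < 1))
        rw [zero_mul] at this
        exact this.eventually (gt_mem_nhds hε)
      have hev2 : ∀ᶠ n in Filter.atTop, ¬ Polynomial.IsRoot q (((2:𝕜)⁻¹) ^ n) := by
        rw [← Nat.cofinite_eq_atTop]
        exact (hroots.preimage hinj.injOn).eventually_cofinite_notMem
      obtain ⟨n, hn1, hn2⟩ := (hev1.and hev2).exists
      set t : 𝕜 := ((2:𝕜)⁻¹) ^ n with ht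
      refine ⟨fun j => x j + t * (y j - x j), ?_, ?_⟩
      · show MvPolynomial.eval _ (p i) ≠ 0
        rw [← hqeval]
        exact hn2
      · rw [dist_comm, dist_pi_lt_iff hε]
        intro j
        rw [dist_eq_norm]
        have : x j + t * (y j - x j) - x j = t * (y j - x j) := by ring
        rw [this, norm_mul]
        calc ‖t‖ * ‖y j - x j‖ ≤ ‖t‖ * M := by
              exact mul_le_mul_of_nonneg_left (hMle j) (norm_nonneg _)
          _ = ((2:ℝ)⁻¹) ^ n * M := by rw [ht, norm_pow, hnorm2]
          _ < ε := hn1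
      -- density done
    have := hdense.open_subset_closure_inter hV
    intro v hv
    have h2 : V ∩ {x : Fin N → 𝕜 | MvPolynomial.eval x (p i) ≠ 0} ⊆
        V ∩ {x : Fin N → 𝕜 | MvPolynomial.eval x (p i) = 0}ᶜ := by
      intro z hz
      exact ⟨hz.1, hz.2⟩
    exact closure_mono h2 (this hv)
end

section
/- Let 𝔽 be ℝ or ℂ, let U ⊆ 𝔽^N be a linear subspace, let S, V ⊆ U, and let T: U → 𝔽^M be a vector space isomorphism, where M = dim U. Then S is relative generic in V (as subsets of 𝔽^N) if and only if T(S) is relative generic in T(V) (as subsets of 𝔽^M). -/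
open Set Matrix

/-- Preimage of an algebraic variety under a linear map is an algebraic variety. -/
lemma IsAlgebraicVariety.preimage_linear {𝕜 : Type*} [RCLike 𝕜] {a b : ℕ}
    (A : (Fin a → 𝕜) →ₗ[𝕜] (Fin b → 𝕜)) {W : Set (Fin b → 𝕜)}
    (hW : IsAlgebraicVariety W) : IsAlgebraicVariety (A ⁻¹' W) := by
  classical
  obtain ⟨k, p, rfl⟩ := hW
  set σ : Fin b → MvPolynomial (Fin a) 𝕜 := fun j =>
    ∑ i : Fin a, MvPolynomial.C (A (fun j' => if i = j' then 1 else 0) j) * MvPolynomial.X i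
  have hσ : ∀ (x : Fin a → 𝕜) j, MvPolynomial.eval x (σ j) = A x j := by
    intro x j
    have := LinearMap.pi_apply_eq_sum_univ A x
    have h2 : A x j = ∑ i : Fin a, x i • A (fun j' => if i = j' then 1 else 0) j := by
      rw [this]; simp [Finset.sum_apply]
    rw [h2]
    simp [σ, smul_eq_mul, mul_comm]
  refine ⟨k, fun i => MvPolynomial.bind₁ σ (p i), ?_⟩
  ext x
  simp only [Set.mem_preimage, Set.mem_setOf_eq]
  have key : ∀ i, MvPolynomial.eval x (MvPolynomial.bind₁ σ (p i))
      = MvPolynomial.eval (A x) (p i) := by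
    intro i
    have e1 : ∀ {n : ℕ} (f : Fin n → 𝕜) (q : MvPolynomial (Fin n) 𝕜),
        MvPolynomial.aeval f q = MvPolynomial.eval f q := by
      intro n f q
      rw [← MvPolynomial.coe_aeval_eq_eval]
      rfl
    have h := MvPolynomial.aeval_bind₁ (R := 𝕜) (S := 𝕜) x σ (p i)
    calc MvPolynomial.eval x (MvPolynomial.bind₁ σ (p i))
        = MvPolynomial.aeval x (MvPolynomial.bind₁ σ (p i)) := (e1 _ _).symm
      _ = MvPolynomial.aeval (fun j => MvPolynomial.aeval x (σ j)) (p i) := h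
      _ = MvPolynomial.eval (A x) (p i) := by
          have hfun : (fun j => MvPolynomial.aeval x (σ j)) = A x :=
            funext fun j => by rw [e1]; exact hσ x j
          rw [hfun, e1]
  constructor
  · intro h i; rw [key i]; exact h i
  · intro h i; rw [← key i]; exact h i

lemma isProperAlgebraicVariety_empty {𝕜 : Type*} [RCLike 𝕜] {n : ℕ} :
    IsProperAlgebraicVariety (∅ : Set (Fin n → 𝕜)) := by
  constructor
  · refine ⟨1, fun _ => 1, ?_⟩
    ext x
    simp only [Set.mem_empty_iff_false, Set.mem_setOf_eq, false_iff]
    intro h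
    simpa using h 0
  · exact Set.empty_ne_univ

/-- Relative genericity is invariant under vector space isomorphisms: for a subspace
`U ⊆ 𝕜^N` of dimension `M`, sets `S, V ⊆ U` and an isomorphism `T : U ≃ 𝕜^M`,
`S` is relative generic in `V` iff `T(S)` is relative generic in `T(V)`. -/
theorem isRelativeGeneric_iff_image {𝕜 : Type*} [RCLike 𝕜] {N M : ℕ}
    (U : Submodule 𝕜 (Fin N → 𝕜)) (S V : Set (Fin N → 𝕜))
    (hS : S ⊆ (U : Set (Fin N → 𝕜))) (hV : V ⊆ (U : Set (Fin N → 𝕜)))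
    (hM : Module.finrank 𝕜 U = M) (T : U ≃ₗ[𝕜] (Fin M → 𝕜)) :
    IsRelativeGeneric S V ↔
      IsRelativeGeneric ((fun x : U => T x) '' (Subtype.val ⁻¹' S))
        ((fun x : U => T x) '' (Subtype.val ⁻¹' V)) := by
  classical
  obtain ⟨Q, hQ⟩ := Submodule.exists_isCompl U
  let π : (Fin N → 𝕜) →ₗ[𝕜] U := Submodule.linearProjOfIsCompl U Q hQ
  let L : (Fin N → 𝕜) →ₗ[𝕜] (Fin M → 𝕜) := T.toLinearMap ∘ₗ π
  let J : (Fin M → 𝕜) →ₗ[𝕜] (Fin N → 𝕜) := U.subtype ∘ₗ (T.symm : (Fin M → 𝕜) →ₗ[𝕜] U)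
  have hLmem : ∀ (x : Fin N → 𝕜) (hx : x ∈ U), L x = T ⟨x, hx⟩ := by
    intro x hx
    simp only [L, π, LinearMap.comp_apply, LinearEquiv.coe_coe]
    congr 1
    exact Submodule.linearProjOfIsCompl_apply_left hQ ⟨x, hx⟩
  have hJT : ∀ u : U, J (T u) = (u : Fin N → 𝕜) := by
    intro u
    simp [J]
  have hLJ : ∀ y, L (J y) = y := by
    intro y
    have hmem : J y ∈ U := (T.symm y).2
    rw [hLmem (J y) hmem]
    have : (⟨J y, hmem⟩ : U) = T.symm y := by
      apply Subtype.ext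
      simp [J]
    rw [this]
    simp
  have hLcont : Continuous L := L.continuous_of_finiteDimensional
  have hJcont : Continuous J := J.continuous_of_finiteDimensional
  constructor
  · rintro ⟨W, ⟨hWvar, hWne⟩, hWS, hWd⟩
    rcases Set.eq_empty_or_nonempty V with hVe | ⟨v, hv⟩
    · refine ⟨∅, isProperAlgebraicVariety_empty, ?_, ?_⟩ <;>
        simp [hVe]
    · -- V nonempty: get a point of V ∩ Wᶜ
      have hvc : v ∈ closure (V ∩ Wᶜ) := hWd hv
      obtain ⟨u, hu⟩ : (V ∩ Wᶜ).Nonempty := by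
        by_contra h
        rw [Set.not_nonempty_iff_eq_empty] at h
        rw [h, closure_empty] at hvc
        exact hvc
      refine ⟨J ⁻¹' W, ⟨hWvar.preimage_linear J, ?_⟩, ?_, ?_⟩
      · intro h
        have : T ⟨u, hV hu.1⟩ ∈ J ⁻¹' W := h ▸ Set.mem_univ _
        rw [Set.mem_preimage, hJT ⟨u, hV hu.1⟩] at this
        exact hu.2 this
      · rintro y ⟨⟨w, hwV, rfl⟩, hyS⟩
        rw [Set.mem_preimage, hJT w]
        apply hWS
        refine ⟨hwV, fun hwS => hyS ⟨w, hwS, rfl⟩⟩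
      · rintro y ⟨w, hwV, rfl⟩
        have h1 : (w : Fin N → 𝕜) ∈ closure (V ∩ Wᶜ) := hWd hwV
        have h2 : L w ∈ closure (L '' (V ∩ Wᶜ)) :=
          (image_closure_subset_closure_image hLcont) ⟨w, h1, rfl⟩
        rw [hLmem w.1 w.2] at h2
        simp only [Subtype.coe_eta] at h2
        refine closure_mono ?_ h2
        rintro z ⟨x, ⟨hxV, hxW⟩, rfl⟩
        rw [hLmem x (hV hxV)]
        refine ⟨⟨⟨x, hV hxV⟩, hxV, rfl⟩, fun hc => ?_⟩
        rw [Set.mem_preimage, hJT ⟨x, hV hxV⟩] at hc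
        exact hxW hc
  · rintro ⟨W', ⟨hWvar, hWne⟩, hWS, hWd⟩
    refine ⟨L ⁻¹' W', ⟨hWvar.preimage_linear L, ?_⟩, ?_, ?_⟩
    · intro h
      obtain ⟨y, hy⟩ : ∃ y, y ∉ W' := by
        by_contra hc
        push_neg at hc
        exact hWne (Set.eq_univ_of_forall hc)
      have : J y ∈ L ⁻¹' W' := h ▸ Set.mem_univ _
      rw [Set.mem_preimage, hLJ y] at this
      exact hy this
    · rintro x ⟨hxV, hxS⟩
      rw [Set.mem_preimage, hLmem x (hV hxV)]
      apply hWS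
      refine ⟨⟨⟨x, hV hxV⟩, hxV, rfl⟩, fun hc => ?_⟩
      obtain ⟨u, huS, hu⟩ := hc
      have : u = ⟨x, hV hxV⟩ := T.injective hu
      rw [this] at huS
      exact hxS huS
    · intro x hxV
      have h1 : T ⟨x, hV hxV⟩ ∈ closure (((fun x : U => T x) '' (Subtype.val ⁻¹' V)) ∩ W'ᶜ) :=
        hWd ⟨⟨x, hV hxV⟩, hxV, rfl⟩
      have h2 : J (T ⟨x, hV hxV⟩) ∈
          closure (J '' ((((fun x : U => T x) '' (Subtype.val ⁻¹' V))) ∩ W'ᶜ)) :=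
        (image_closure_subset_closure_image hJcont) ⟨_, h1, rfl⟩
      rw [hJT] at h2
      refine closure_mono ?_ h2
      rintro z ⟨y, ⟨⟨u, huV, rfl⟩, hyW⟩, rfl⟩
      rw [hJT u]
      refine ⟨huV, fun hc => ?_⟩
      rw [Set.mem_preimage, hLmem u.1 u.2] at hc
      simp only [Subtype.coe_eta] at hc
      exact hyW hc
end
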